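/- (Pinsker-type dynamics bound, DARC form) Under the setting of two MDPs M_src, M_tar with rewards in [0, r_max] differing only in dynamics, for any policy π: η_{M_tar}(π) ≥ η_{M_src}(π) − (γ r_max/(1−γ)²) · √(2 · E_{(s,a)∼ρ^π_{src}}[ D_KL(P_src(·|s,a) ‖ P_tar(·|s,a)) ]). -/

import Mathlib

open scoped BigOperators

noncomputable section

/-- Distribution over states at time `t`, starting from `ρ0`, following policy `pol`
in the MDP with transition kernel `P`. -/
def stateDist {S A : Type} [Fintype S] [Fintype A]
    (P : S → A → S → ℝ) (pol : S → A → ℝ) (ρ0 : S → ℝ) : ℕ → S → ℝ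
  | 0 => ρ0
  | t + 1 => fun s' => ∑ s : S, ∑ a : A, stateDist P pol ρ0 t s * pol s a * P s a s'

/-- Normalized discounted state-action occupancy measure. -/
def occupancy {S A : Type} [Fintype S] [Fintype A]
    (P : S → A → S → ℝ) (pol : S → A → ℝ) (ρ0 : S → ℝ) (γ : ℝ) (s : S) (a : A) : ℝ :=
  (1 - γ) * ∑' t : ℕ, γ ^ t * stateDist P pol ρ0 t s * pol s a

/-- Normalized expected discounted return `η_M(π) = E_{(s,a)∼ρ^π_M}[r(s,a)]`. -/
def ret {S A : Type} [Fintype S] [Fintype A]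
    (P : S → A → S → ℝ) (pol : S → A → ℝ) (ρ0 : S → ℝ) (γ : ℝ) (r : S → A → ℝ) : ℝ :=
  ∑ s : S, ∑ a : A, occupancy P pol ρ0 γ s a * r s a

/-- Value function `V^π(s)`: expected discounted return starting from state `s`. -/
def valueFn {S A : Type} [Fintype S] [Fintype A] [DecidableEq S]
    (P : S → A → S → ℝ) (pol : S → A → ℝ) (γ : ℝ) (r : S → A → ℝ) (s : S) : ℝ :=
  ∑' t : ℕ, γ ^ t * ∑ s' : S, stateDist P pol (fun s'' => if s'' = s then 1 else 0) t s' *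
    ∑ a : A, pol s' a * r s' a

/-- Action-value function `Q^π(s,a)`. -/
def qFn {S A : Type} [Fintype S] [Fintype A] [DecidableEq S]
    (P : S → A → S → ℝ) (pol : S → A → ℝ) (γ : ℝ) (r : S → A → ℝ) (s : S) (a : A) : ℝ :=
  r s a + γ * ∑ s' : S, P s a s' * valueFn P pol γ r s'

/-- Total variation distance between two distributions on a finite set. -/
def tvDist {X : Type} [Fintype X] (p q : X → ℝ) : ℝ :=
  (1 / 2) * ∑ x : X, |p x - q x|

/-- `P` is a Markov kernel: nonnegative and each `P s a` sums to one. -/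
def IsKernel {S A : Type} [Fintype S] (P : S → A → S → ℝ) : Prop :=
  ∀ s a, (∀ s', 0 ≤ P s a s') ∧ ∑ s' : S, P s a s' = 1

/-- `pol` is a (stochastic) policy. -/
def IsPolicy {S A : Type} [Fintype A] (pol : S → A → ℝ) : Prop :=
  ∀ s, (∀ a, 0 ≤ pol s a) ∧ ∑ a : A, pol s a = 1

/-- `ρ0` is a probability distribution over states. -/
def IsDist {S : Type} [Fintype S] (ρ0 : S → ℝ) : Prop :=
  (∀ s, 0 ≤ ρ0 s) ∧ ∑ s : S, ρ0 s = 1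

/-- KL divergence between two distributions on a finite set. -/
def klDiv {X : Type} [Fintype X] (p q : X → ℝ) : ℝ :=
  ∑ x : X, p x * Real.log (p x / q x)


/-!
Write `d_t` and `d'_t` for the state distributions at time `t` under the source and target
dynamics. One step of the chain gives
`TV(d_{t+1}, d'_{t+1}) ≤ TV(d_t, d'_t) + E_{s ∼ d_t, a ∼ π}[TV(P_src(s,a), P_tar(s,a))]`,
and since `d_0 = d'_0`, the discounted sum of `TV(d_t, d'_t)` is at most `γ / (1 - γ)` times the
discounted sum of these one-step errors. Rewards in `[0, r_max]` turn a distance `TV(d_t, d'_t)`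
into a reward gap of at most `r_max · TV(d_t, d'_t)`, so
`η_src - η_tar ≤ γ r_max / (1 - γ) · E_{ρ^π_src}[TV(P_src, P_tar)]`.
Finally `TV² ≤ ∑ (√p - √q)² ≤ KL` (Hellinger) and Jensen for `√` bound the expected total
variation by `√(E[KL])`.
-/

open Real

lemma sq_sqrt_sub_sqrt_le_mul_log_div_sub_add {p q : ℝ} (hp : 0 ≤ p) (hq : 0 ≤ q)
    (hpq : 0 < p → 0 < q) : (√p - √q) ^ 2 ≤ p * log (p / q) - p + q := by
  rcases hp.eq_or_lt with rfl | hp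
  · simp [sq_sqrt hq]
  have hq := hpq hp
  have hsp : √p ^ 2 = p := sq_sqrt hp.le
  have hsq : √q ^ 2 = q := sq_sqrt hq.le
  have hlog : log (q / p) ≤ 2 * (√q / √p - 1) := by
    have hsq_div : q / p = (√q / √p) ^ 2 := by rw [div_pow, hsp, hsq]
    rw [hsq_div, log_pow]
    have := log_le_sub_one_of_pos (div_pos (sqrt_pos.2 hq) (sqrt_pos.2 hp))
    push_cast
    linarith
  have hmul : p * (√q / √p) = √p * √q := by
    field_simp
    exact hsp.symm
  rw [← neg_neg (log (p / q)), ← log_inv, inv_div]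
  nlinarith [mul_le_mul_of_nonneg_left hlog hp.le]

lemma summable_geometric_mul_of_abs_le {γ C : ℝ} (hγ0 : 0 ≤ γ) (hγ1 : γ < 1) {c : ℕ → ℝ}
    (hc : ∀ t, |c t| ≤ C) : Summable fun t => γ ^ t * c t :=
  ((summable_geometric_of_lt_one hγ0 hγ1).mul_right C).of_norm_bounded fun t => by
    rw [norm_mul, norm_pow, Real.norm_of_nonneg hγ0]
    exact mul_le_mul_of_nonneg_left (hc t) (pow_nonneg hγ0 t)

lemma one_sub_mul_tsum_le_mul_tsum_of_succ_le {γ : ℝ} (hγ : 0 ≤ γ) {x e : ℕ → ℝ}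
    (hx : Summable fun t => γ ^ t * x t) (he : Summable fun t => γ ^ t * e t)
    (hx0 : x 0 = 0) (hstep : ∀ t, x (t + 1) ≤ x t + e t) :
    (1 - γ) * ∑' t, γ ^ t * x t ≤ γ * ∑' t, γ ^ t * e t := by
  have hshift : ∑' t, γ ^ t * x t = ∑' t, γ ^ (t + 1) * x (t + 1) := by
    rw [hx.tsum_eq_zero_add, hx0, mul_zero, zero_add]
  have hle : ∑' t, γ ^ (t + 1) * x (t + 1) ≤ ∑' t, (γ * (γ ^ t * x t) + γ * (γ ^ t * e t)) :=
    ((summable_nat_add_iff 1).2 hx).tsum_le_tsum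
      (fun t => by
        have := mul_le_mul_of_nonneg_left (hstep t) (pow_nonneg hγ (t + 1))
        rw [pow_succ'] at this ⊢
        linarith)
      ((hx.mul_left γ).add (he.mul_left γ))
  rw [(hx.mul_left γ).tsum_add (he.mul_left γ), tsum_mul_left, tsum_mul_left] at hle
  linarith

section WeightedSums

variable {ι κ : Type} [Fintype ι] [Fintype κ]

lemma abs_sum_mul_le_of_abs_le {w f : ι → ℝ} {C : ℝ} (hw : ∀ i, 0 ≤ w i)
    (hw1 : ∑ i, w i = 1) (hf : ∀ i, |f i| ≤ C) : |∑ i, w i * f i| ≤ C := calc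
  _ ≤ ∑ i, w i * C := (Finset.abs_sum_le_sum_abs _ _).trans <| Finset.sum_le_sum fun i _ => by
        rw [abs_mul, abs_of_nonneg (hw i)]
        exact mul_le_mul_of_nonneg_left (hf i) (hw i)
  _ = C := by rw [← Finset.sum_mul, hw1, one_mul]

lemma sum_mul_le_sqrt_sum_mul_of_sq_le {w u v : ι → ℝ} (hw : ∀ i, 0 ≤ w i)
    (hw1 : ∑ i, w i = 1) (hu : ∀ i, 0 ≤ u i) (huv : ∀ i, u i ^ 2 ≤ v i) :
    ∑ i, w i * u i ≤ √(∑ i, w i * v i) := calc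
  _ = ∑ i, w i • √(u i ^ 2) := by simp only [sqrt_sq (hu _), smul_eq_mul]
  _ ≤ √(∑ i, w i • u i ^ 2) :=
    strictConcaveOn_sqrt.concaveOn.le_map_sum (fun i _ => hw i) hw1
      (fun i _ => Set.mem_Ici.2 (sq_nonneg _))
  _ ≤ √(∑ i, w i * v i) :=
    sqrt_le_sqrt <| Finset.sum_le_sum fun i _ => mul_le_mul_of_nonneg_left (huv i) (hw i)

lemma sum_abs_sum_mul_le (c : ι → ℝ) (v : ι → κ → ℝ) :
    ∑ k, |∑ i, c i * v i k| ≤ ∑ i, |c i| * ∑ k, |v i k| := calc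
  _ ≤ ∑ k, ∑ i, |c i| * |v i k| :=
    Finset.sum_le_sum fun k _ => (Finset.abs_sum_le_sum_abs _ _).trans_eq (by simp [abs_mul])
  _ = _ := by rw [Finset.sum_comm]; simp only [Finset.mul_sum]

end WeightedSums

section Distributions

variable {X : Type} [Fintype X] {p q : X → ℝ}

lemma tvDist_nonneg (p q : X → ℝ) : 0 ≤ tvDist p q := by
  unfold tvDist
  positivity

lemma two_mul_tvDist (p q : X → ℝ) : 2 * tvDist p q = ∑ x, |p x - q x| := by
  rw [tvDist]
  ring

lemma abs_tvDist_le_one (hp : ∀ x, 0 ≤ p x) (hq : ∀ x, 0 ≤ q x)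
    (hp1 : ∑ x, p x = 1) (hq1 : ∑ x, q x = 1) : |tvDist p q| ≤ 1 := by
  have : ∑ x, |p x - q x| ≤ ∑ x, (p x + q x) := Finset.sum_le_sum fun x _ =>
    abs_sub_le_iff.2 ⟨by linarith [hq x], by linarith [hp x]⟩
  rw [Finset.sum_add_distrib, hp1, hq1, ← two_mul_tvDist] at this
  rw [abs_of_nonneg (tvDist_nonneg p q)]
  linarith

lemma tvDist_triangle (p q r : X → ℝ) : tvDist p r ≤ tvDist p q + tvDist q r := by
  simp only [tvDist, ← mul_add, ← Finset.sum_add_distrib]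
  gcongr with x
  exact abs_sub_le _ _ _

-- Centring `f` at `c / 2` is possible because `p - q` has total mass zero.
lemma abs_sum_mul_sub_sum_mul_le_mul_tvDist {f : X → ℝ} {c : ℝ}
    (hpq : ∑ x, p x = ∑ x, q x) (hf : ∀ x, 0 ≤ f x ∧ f x ≤ c) :
    |∑ x, p x * f x - ∑ x, q x * f x| ≤ c * tvDist p q := by
  have hcentre : ∑ x, p x * f x - ∑ x, q x * f x = ∑ x, (p x - q x) * (f x - c / 2) := by
    simp only [mul_sub, sub_mul, Finset.sum_sub_distrib, ← Finset.sum_mul, hpq]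
    ring
  rw [hcentre, tvDist, ← mul_assoc, Finset.mul_sum]
  refine (Finset.abs_sum_le_sum_abs _ _).trans (Finset.sum_le_sum fun x _ => ?_)
  rw [abs_mul]
  have : |f x - c / 2| ≤ c / 2 := abs_le.2 ⟨by linarith [hf x], by linarith [hf x]⟩
  nlinarith [abs_nonneg (p x - q x)]

-- `|p - q| = |√p - √q| (√p + √q)`, then Cauchy–Schwarz and `∑ (√p + √q)² ≤ 2 ∑ (p + q) = 4`.
lemma tvDist_sq_le_sum_sq_sqrt_sub_sqrt (hp : ∀ x, 0 ≤ p x) (hq : ∀ x, 0 ≤ q x)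
    (hp1 : ∑ x, p x = 1) (hq1 : ∑ x, q x = 1) :
    tvDist p q ^ 2 ≤ ∑ x, (√(p x) - √(q x)) ^ 2 := by
  have hfactor : ∀ x, |p x - q x| = |√(p x) - √(q x)| * (√(p x) + √(q x)) := fun x => by
    rw [← abs_of_nonneg (by positivity : 0 ≤ √(p x) + √(q x)), ← abs_mul]
    congr 1
    nlinarith [sq_sqrt (hp x), sq_sqrt (hq x)]
  have hsum : ∑ x, (√(p x) + √(q x)) ^ 2 ≤ 4 := calc
    _ ≤ ∑ x, 2 * (p x + q x) := Finset.sum_le_sum fun x _ => by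
          nlinarith [sq_sqrt (hp x), sq_sqrt (hq x), sq_nonneg (√(p x) - √(q x))]
    _ = 4 := by rw [← Finset.mul_sum, Finset.sum_add_distrib, hp1, hq1]; norm_num
  have hcs := Finset.sum_mul_sq_le_sq_mul_sq Finset.univ
    (fun x => |√(p x) - √(q x)|) (fun x => √(p x) + √(q x))
  simp only [← hfactor, sq_abs] at hcs
  have hH : 0 ≤ ∑ x, (√(p x) - √(q x)) ^ 2 := by positivity
  rw [tvDist, mul_pow]
  nlinarith [mul_le_mul_of_nonneg_left hsum hH]

lemma sum_sq_sqrt_sub_sqrt_le_klDiv (hp : ∀ x, 0 ≤ p x) (hq : ∀ x, 0 ≤ q x)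
    (hp1 : ∑ x, p x = 1) (hq1 : ∑ x, q x = 1) (hpq : ∀ x, 0 < p x → 0 < q x) :
    ∑ x, (√(p x) - √(q x)) ^ 2 ≤ klDiv p q := calc
  _ ≤ ∑ x, (p x * log (p x / q x) - p x + q x) :=
    Finset.sum_le_sum fun x _ => sq_sqrt_sub_sqrt_le_mul_log_div_sub_add (hp x) (hq x) (hpq x)
  _ = klDiv p q := by
    rw [Finset.sum_add_distrib, Finset.sum_sub_distrib, hp1, hq1, klDiv]
    ring

lemma tvDist_sq_le_klDiv (hp : ∀ x, 0 ≤ p x) (hq : ∀ x, 0 ≤ q x)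
    (hp1 : ∑ x, p x = 1) (hq1 : ∑ x, q x = 1) (hpq : ∀ x, 0 < p x → 0 < q x) :
    tvDist p q ^ 2 ≤ klDiv p q :=
  (tvDist_sq_le_sum_sq_sqrt_sub_sqrt hp hq hp1 hq1).trans
    (sum_sq_sqrt_sub_sqrt_le_klDiv hp hq hp1 hq1 hpq)

end Distributions

section MDP

variable {S A : Type} [Fintype S] [Fintype A]

def policyKernel (P : S → A → S → ℝ) (pol : S → A → ℝ) (s s' : S) : ℝ :=
  ∑ a, pol s a * P s a s'

def stepDist (P : S → A → S → ℝ) (pol : S → A → ℝ) (d : S → ℝ) (s' : S) : ℝ :=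
  ∑ s, d s * policyKernel P pol s s'

def polExpect (pol : S → A → ℝ) (d : S → ℝ) (g : S → A → ℝ) : ℝ :=
  ∑ s, d s * ∑ a, pol s a * g s a

variable {P Q : S → A → S → ℝ} {pol : S → A → ℝ} {ρ0 d d' : S → ℝ} {γ : ℝ}

lemma stateDist_succ (P : S → A → S → ℝ) (pol : S → A → ℝ) (ρ0 : S → ℝ) (t : ℕ) :
    stateDist P pol ρ0 (t + 1) = stepDist P pol (stateDist P pol ρ0 t) := by
  ext s'
  simp only [stateDist, stepDist, policyKernel, Finset.mul_sum, mul_assoc]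

lemma policyKernel_nonneg (hP : IsKernel P) (hpol : IsPolicy pol) (s s' : S) :
    0 ≤ policyKernel P pol s s' :=
  Finset.sum_nonneg fun a _ => mul_nonneg ((hpol s).1 a) ((hP s a).1 s')

lemma sum_policyKernel (hP : IsKernel P) (hpol : IsPolicy pol) (s : S) :
    ∑ s', policyKernel P pol s s' = 1 := by
  simp only [policyKernel]
  rw [Finset.sum_comm]
  simp only [← Finset.mul_sum, (hP s _).2, mul_one, (hpol s).2]

lemma isDist_stepDist (hP : IsKernel P) (hpol : IsPolicy pol) (hd : IsDist d) :
    IsDist (stepDist P pol d) := by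
  refine ⟨fun s' => Finset.sum_nonneg fun s _ =>
    mul_nonneg (hd.1 s) (policyKernel_nonneg hP hpol s s'), ?_⟩
  simp only [stepDist]
  rw [Finset.sum_comm]
  simp only [← Finset.mul_sum, sum_policyKernel hP hpol, mul_one, hd.2]

lemma isDist_stateDist (hP : IsKernel P) (hpol : IsPolicy pol) (hρ0 : IsDist ρ0) (t : ℕ) :
    IsDist (stateDist P pol ρ0 t) := by
  induction t with
  | zero => exact hρ0
  | succ t ih => rw [stateDist_succ]; exact isDist_stepDist hP hpol ih

lemma IsDist.le_one (hd : IsDist d) (s : S) : d s ≤ 1 :=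
  hd.2 ▸ Finset.single_le_sum (fun s _ => hd.1 s) (Finset.mem_univ s)

lemma abs_polExpect_le {g : S → A → ℝ} {C : ℝ} (hpol : IsPolicy pol) (hd : IsDist d)
    (hg : ∀ s a, |g s a| ≤ C) : |polExpect pol d g| ≤ C :=
  abs_sum_mul_le_of_abs_le hd.1 hd.2 fun s =>
    abs_sum_mul_le_of_abs_le (hpol s).1 (hpol s).2 (hg s)

lemma abs_polExpect_sub_polExpect_le {g : S → A → ℝ} {c : ℝ} (hpol : IsPolicy pol)
    (hd : ∑ s, d s = ∑ s, d' s) (hg : ∀ s a, 0 ≤ g s a ∧ g s a ≤ c) :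
    |polExpect pol d g - polExpect pol d' g| ≤ c * tvDist d d' := by
  refine abs_sum_mul_sub_sum_mul_le_mul_tvDist hd fun s =>
    ⟨Finset.sum_nonneg fun a _ => mul_nonneg ((hpol s).1 a) (hg s a).1, ?_⟩
  refine (le_abs_self _).trans (abs_sum_mul_le_of_abs_le (hpol s).1 (hpol s).2 fun a => ?_)
  exact abs_le.2 ⟨by linarith [hg s a], (hg s a).2⟩

lemma tvDist_stepDist_le_tvDist (hQ : IsKernel Q) (hpol : IsPolicy pol) :
    tvDist (stepDist Q pol d) (stepDist Q pol d') ≤ tvDist d d' := by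
  have hsplit := sum_abs_sum_mul_le (fun s => d s - d' s) (policyKernel Q pol)
  simp only [sub_mul, Finset.sum_sub_distrib, abs_of_nonneg (policyKernel_nonneg hQ hpol _ _),
    sum_policyKernel hQ hpol, mul_one] at hsplit
  unfold tvDist stepDist
  exact mul_le_mul_of_nonneg_left hsplit (by norm_num)

lemma tvDist_stepDist_le_polExpect (hpol : IsPolicy pol) (hd : ∀ s, 0 ≤ d s) :
    tvDist (stepDist P pol d) (stepDist Q pol d) ≤
      polExpect pol d fun s a => tvDist (P s a) (Q s a) := by
  have hrow (s : S) : ∑ s', |policyKernel P pol s s' - policyKernel Q pol s s'| ≤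
      ∑ a, pol s a * (2 * tvDist (P s a) (Q s a)) := by
    simp only [policyKernel, two_mul_tvDist]
    simpa only [mul_sub, Finset.sum_sub_distrib, abs_of_nonneg ((hpol s).1 _)] using
      sum_abs_sum_mul_le (pol s) fun a s' => P s a s' - Q s a s'
  have hsplit := sum_abs_sum_mul_le d fun s s' => policyKernel P pol s s' - policyKernel Q pol s s'
  simp only [mul_sub, Finset.sum_sub_distrib, abs_of_nonneg (hd _)] at hsplit
  calc tvDist (stepDist P pol d) (stepDist Q pol d)
      ≤ 1 / 2 * ∑ s, d s * ∑ s', |policyKernel P pol s s' - policyKernel Q pol s s'| := by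
        unfold tvDist stepDist
        exact mul_le_mul_of_nonneg_left hsplit (by norm_num)
    _ ≤ 1 / 2 * ∑ s, d s * ∑ a, pol s a * (2 * tvDist (P s a) (Q s a)) := by
        gcongr with s
        exacts [hd s, hrow s]
    _ = polExpect pol d fun s a => tvDist (P s a) (Q s a) := by
        simp only [polExpect, Finset.mul_sum]
        ring_nf

lemma tvDist_stepDist_le (hQ : IsKernel Q) (hpol : IsPolicy pol) (hd : ∀ s, 0 ≤ d s) :
    tvDist (stepDist P pol d) (stepDist Q pol d') ≤
      tvDist d d' + polExpect pol d fun s a => tvDist (P s a) (Q s a) := by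
  have := tvDist_triangle (stepDist P pol d) (stepDist Q pol d) (stepDist Q pol d')
  linarith [tvDist_stepDist_le_polExpect (P := P) (Q := Q) hpol hd,
    tvDist_stepDist_le_tvDist (d := d) (d' := d') hQ hpol]

lemma sum_occupancy_mul_eq_tsum (hP : IsKernel P) (hpol : IsPolicy pol) (hρ0 : IsDist ρ0)
    (hγ0 : 0 ≤ γ) (hγ1 : γ < 1) (g : S → A → ℝ) :
    ∑ s, ∑ a, occupancy P pol ρ0 γ s a * g s a =
      (1 - γ) * ∑' t, γ ^ t * polExpect pol (stateDist P pol ρ0 t) g := by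
  set d := stateDist P pol ρ0
  have hsummable (s : S) (a : A) : Summable fun t => γ ^ t * (d t s * pol s a * g s a) :=
    summable_geometric_mul_of_abs_le hγ0 hγ1 fun t => by
      rw [mul_assoc, abs_mul, abs_of_nonneg ((isDist_stateDist hP hpol hρ0 t).1 s)]
      exact mul_le_of_le_one_left (abs_nonneg _) ((isDist_stateDist hP hpol hρ0 t).le_one s)
  have hterm (s : S) (a : A) :
      occupancy P pol ρ0 γ s a * g s a = (1 - γ) * ∑' t, γ ^ t * (d t s * pol s a * g s a) := by
    rw [occupancy, mul_assoc, ← tsum_mul_right]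
    congr 2 with t
    ring
  simp only [hterm, ← Finset.mul_sum]
  congr 1
  calc ∑ s, ∑ a, ∑' t, γ ^ t * (d t s * pol s a * g s a)
      = ∑ s, ∑' t, ∑ a, γ ^ t * (d t s * pol s a * g s a) :=
        Finset.sum_congr rfl fun s _ => (Summable.tsum_finsetSum fun a _ => hsummable s a).symm
    _ = ∑' t, ∑ s, ∑ a, γ ^ t * (d t s * pol s a * g s a) :=
        (Summable.tsum_finsetSum fun s _ => summable_sum fun a _ => hsummable s a).symm
    _ = ∑' t, γ ^ t * polExpect pol (d t) g := by
        simp only [polExpect, Finset.mul_sum, mul_assoc]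

lemma occupancy_nonneg (hP : IsKernel P) (hpol : IsPolicy pol) (hρ0 : IsDist ρ0)
    (hγ0 : 0 ≤ γ) (hγ1 : γ < 1) (s : S) (a : A) : 0 ≤ occupancy P pol ρ0 γ s a :=
  mul_nonneg (by linarith) <| tsum_nonneg fun t =>
    mul_nonneg (mul_nonneg (pow_nonneg hγ0 t) ((isDist_stateDist hP hpol hρ0 t).1 s))
      ((hpol s).1 a)

lemma sum_occupancy_eq_one (hP : IsKernel P) (hpol : IsPolicy pol) (hρ0 : IsDist ρ0)
    (hγ0 : 0 ≤ γ) (hγ1 : γ < 1) : ∑ s, ∑ a, occupancy P pol ρ0 γ s a = 1 := by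
  have hone (t : ℕ) : polExpect pol (stateDist P pol ρ0 t) (fun _ _ => 1) = 1 := by
    simp only [polExpect, mul_one, (hpol _).2, (isDist_stateDist hP hpol hρ0 t).2]
  have := sum_occupancy_mul_eq_tsum hP hpol hρ0 hγ0 hγ1 fun _ _ => 1
  simp only [mul_one, hone] at this
  rw [this, tsum_geometric_of_lt_one hγ0 hγ1, mul_inv_cancel₀ (by linarith)]

lemma summable_geometric_mul_polExpect {d : ℕ → S → ℝ} {g : S → A → ℝ} {C : ℝ}
    (hpol : IsPolicy pol) (hd : ∀ t, IsDist (d t)) (hγ0 : 0 ≤ γ) (hγ1 : γ < 1)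
    (hg : ∀ s a, |g s a| ≤ C) : Summable fun t => γ ^ t * polExpect pol (d t) g :=
  summable_geometric_mul_of_abs_le hγ0 hγ1 fun t => abs_polExpect_le hpol (hd t) hg

lemma one_sub_mul_tsum_tvDist_stateDist_le (hP : IsKernel P) (hQ : IsKernel Q)
    (hpol : IsPolicy pol) (hρ0 : IsDist ρ0) (hγ0 : 0 ≤ γ) (hγ1 : γ < 1) :
    (1 - γ) * ∑' t, γ ^ t * tvDist (stateDist P pol ρ0 t) (stateDist Q pol ρ0 t) ≤
      γ * ∑' t, γ ^ t *
        polExpect pol (stateDist P pol ρ0 t) fun s a => tvDist (P s a) (Q s a) := by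
  have hdP := isDist_stateDist hP hpol hρ0
  have hdQ := isDist_stateDist hQ hpol hρ0
  refine one_sub_mul_tsum_le_mul_tsum_of_succ_le hγ0
    (summable_geometric_mul_of_abs_le hγ0 hγ1 fun t =>
      abs_tvDist_le_one (hdP t).1 (hdQ t).1 (hdP t).2 (hdQ t).2)
    (summable_geometric_mul_polExpect hpol hdP hγ0 hγ1 fun s a =>
      abs_tvDist_le_one (hP s a).1 (hQ s a).1 (hP s a).2 (hQ s a).2)
    (by simp [stateDist, tvDist]) fun t => ?_
  simp only [stateDist_succ]
  exact tvDist_stepDist_le hQ hpol (hdP t).1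

lemma ret_sub_ret_le_tvDist (hP : IsKernel P) (hQ : IsKernel Q) (hpol : IsPolicy pol)
    (hρ0 : IsDist ρ0) (hγ0 : 0 ≤ γ) (hγ1 : γ < 1) {r : S → A → ℝ} {rmax : ℝ} (hrmax : 0 ≤ rmax)
    (hr : ∀ s a, 0 ≤ r s a ∧ r s a ≤ rmax) :
    ret P pol ρ0 γ r - ret Q pol ρ0 γ r ≤
      γ * rmax / (1 - γ) * ∑ s, ∑ a, occupancy P pol ρ0 γ s a * tvDist (P s a) (Q s a) := by
  have hdP := isDist_stateDist hP hpol hρ0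
  have hdQ := isDist_stateDist hQ hpol hρ0
  have hdrift := one_sub_mul_tsum_tvDist_stateDist_le hP hQ hpol hρ0 hγ0 hγ1
  rw [ret, ret, sum_occupancy_mul_eq_tsum hP hpol hρ0 hγ0 hγ1,
    sum_occupancy_mul_eq_tsum hQ hpol hρ0 hγ0 hγ1, sum_occupancy_mul_eq_tsum hP hpol hρ0 hγ0 hγ1]
  set dP := stateDist P pol ρ0
  set dQ := stateDist Q pol ρ0
  have hr_abs (s : S) (a : A) : |r s a| ≤ rmax := abs_le.2 ⟨by linarith [hr s a], (hr s a).2⟩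
  have hfP := summable_geometric_mul_polExpect hpol hdP hγ0 hγ1 hr_abs
  have hfQ := summable_geometric_mul_polExpect hpol hdQ hγ0 hγ1 hr_abs
  have hx : Summable fun t => γ ^ t * tvDist (dP t) (dQ t) :=
    summable_geometric_mul_of_abs_le hγ0 hγ1 fun t =>
      abs_tvDist_le_one (hdP t).1 (hdQ t).1 (hdP t).2 (hdQ t).2
  have hgap : ∑' t, (γ ^ t * polExpect pol (dP t) r - γ ^ t * polExpect pol (dQ t) r) ≤
      rmax * ∑' t, γ ^ t * tvDist (dP t) (dQ t) := by
    rw [← tsum_mul_left]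
    refine (hfP.sub hfQ).tsum_le_tsum (fun t => ?_) (hx.mul_left rmax)
    rw [← mul_sub, mul_left_comm]
    refine mul_le_mul_of_nonneg_left ((le_abs_self _).trans ?_) (pow_nonneg hγ0 t)
    exact abs_polExpect_sub_polExpect_le hpol ((hdP t).2.trans (hdQ t).2.symm) hr
  rw [← mul_sub, ← hfP.tsum_sub hfQ]
  have h1γ : 0 < 1 - γ := by linarith
  calc (1 - γ) * ∑' t, (γ ^ t * polExpect pol (dP t) r - γ ^ t * polExpect pol (dQ t) r)
      ≤ rmax * ((1 - γ) * ∑' t, γ ^ t * tvDist (dP t) (dQ t)) := by nlinarith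
    _ ≤ rmax * (γ * ∑' t, γ ^ t * polExpect pol (dP t) fun s a => tvDist (P s a) (Q s a)) :=
        mul_le_mul_of_nonneg_left hdrift hrmax
    _ = _ := by field_simp

end MDP

theorem performance_bound_pinsker {S A : Type} [Fintype S] [Fintype A]
    (Psrc Ptar : S → A → S → ℝ) (pol : S → A → ℝ) (ρ0 : S → ℝ) (γ : ℝ)
    (r : S → A → ℝ) (rmax : ℝ)
    (hPsrc : IsKernel Psrc) (hPtar : IsKernel Ptar) (hpol : IsPolicy pol) (hρ0 : IsDist ρ0)
    (hγ0 : 0 ≤ γ) (hγ1 : γ < 1)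
    (hr : ∀ s a, 0 ≤ r s a ∧ r s a ≤ rmax)
    (habs : ∀ s a s', 0 < Psrc s a s' → 0 < Ptar s a s') :
    ret Ptar pol ρ0 γ r ≥
      ret Psrc pol ρ0 γ r -
        (γ * rmax / (1 - γ) ^ 2) *
          Real.sqrt (2 * ∑ s : S, ∑ a : A, occupancy Psrc pol ρ0 γ s a *
            klDiv (Psrc s a) (Ptar s a)) := by
  obtain ⟨s, -⟩ := Finset.exists_ne_zero_of_sum_ne_zero (hρ0.2 ▸ one_ne_zero : ∑ s, ρ0 s ≠ 0)
  obtain ⟨a, -⟩ :=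
    Finset.exists_ne_zero_of_sum_ne_zero ((hpol s).2 ▸ one_ne_zero : ∑ a, pol s a ≠ 0)
  have hrmax : 0 ≤ rmax := (hr s a).1.trans (hr s a).2
  have hpinsker (s : S) (a : A) : tvDist (Psrc s a) (Ptar s a) ^ 2 ≤
      2 * klDiv (Psrc s a) (Ptar s a) := by
    have := tvDist_sq_le_klDiv (hPsrc s a).1 (hPtar s a).1 (hPsrc s a).2 (hPtar s a).2 (habs s a)
    linarith [sq_nonneg (tvDist (Psrc s a) (Ptar s a))]
  have hjensen : ∑ s, ∑ a, occupancy Psrc pol ρ0 γ s a * tvDist (Psrc s a) (Ptar s a) ≤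
      √(2 * ∑ s, ∑ a, occupancy Psrc pol ρ0 γ s a * klDiv (Psrc s a) (Ptar s a)) := by
    simp only [Finset.mul_sum, mul_left_comm (2 : ℝ), ← Fintype.sum_prod_type']
    exact sum_mul_le_sqrt_sum_mul_of_sq_le
      (fun p => occupancy_nonneg hPsrc hpol hρ0 hγ0 hγ1 p.1 p.2)
      (by rw [Fintype.sum_prod_type']; exact sum_occupancy_eq_one hPsrc hpol hρ0 hγ0 hγ1)
      (fun p => tvDist_nonneg _ _) fun p => hpinsker p.1 p.2
  have hcoef : γ * rmax / (1 - γ) ≤ γ * rmax / (1 - γ) ^ 2 :=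
    div_le_div_of_nonneg_left (by positivity) (by nlinarith) (by nlinarith)
  suffices ret Psrc pol ρ0 γ r - ret Ptar pol ρ0 γ r ≤ γ * rmax / (1 - γ) ^ 2 *
      √(2 * ∑ s, ∑ a, occupancy Psrc pol ρ0 γ s a * klDiv (Psrc s a) (Ptar s a)) by linarith
  calc ret Psrc pol ρ0 γ r - ret Ptar pol ρ0 γ r
      ≤ γ * rmax / (1 - γ) *
          ∑ s, ∑ a, occupancy Psrc pol ρ0 γ s a * tvDist (Psrc s a) (Ptar s a) :=
        ret_sub_ret_le_tvDist hPsrc hPtar hpol hρ0 hγ0 hγ1 hrmax hr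
    _ ≤ γ * rmax / (1 - γ) *
          √(2 * ∑ s, ∑ a, occupancy Psrc pol ρ0 γ s a * klDiv (Psrc s a) (Ptar s a)) := by
        gcongr
    _ ≤ _ := mul_le_mul_of_nonneg_right hcoef (sqrt_nonneg _)
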